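/- Let M0 be a maximal matching of G, M* a maximum matching, and W_M the set of edges of M* with exactly one endpoint in V(M0). Suppose W is a set of wings (edges with exactly one endpoint in V(M0)) such that deg_W(u) ≤ 1 for every u ∈ V(M0), and such that for every wing (u,v) ∈ W_M with u ∈ V(M0) and v ∉ V(M0), either (u,v) ∈ W, or deg_W(u) ≥ 1, or deg_W(v) ≥ 2. Then |W| ≥ (2/3)|W_M|. -/

import Mathlib

variable {V : Type*} [Fintype V] [DecidableEq V]

/-- A matching of `G`: a finite set of edges of `G` that are pairwise vertex-disjoint. -/
def IsMatching (G : SimpleGraph V) (M : Finset (Sym2 V)) : Prop :=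
  (∀ e ∈ M, e ∈ G.edgeSet) ∧
    ∀ e ∈ M, ∀ f ∈ M, e ≠ f → ∀ v : V, v ∈ e → v ∉ f

/-- The set of vertices covered by a set of edges. -/
def mverts (M : Finset (Sym2 V)) : Set V := {v | ∃ e ∈ M, v ∈ e}

/-- The degree of a vertex `x` in a set of edges `W`. -/
def degW (W : Finset (Sym2 V)) (x : V) : ℕ := (W.filter (fun e => x ∈ e)).card

/-!
Charge every wing `e = s(u, v)` of `W_M` (with `u ∈ V(M0)`) with twice the number of `W`-edges
through `u` plus the number of `W`-edges through `v`. The greedy hypothesis makes each charge at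
least `2`. A `W`-edge, being a wing, has exactly one endpoint inside and one outside `V(M0)`, and
since `W_M` is a matching each of these endpoints lies on at most one edge of `W_M`; so the total
charge is at most `2|W| + |W|`.
-/

open Finset

theorem Finset.sum_card_bipartiteAbove_le_card {α β : Type*} {s : Finset α} {t : Finset β}
    (r : α → β → Prop) [∀ a b, Decidable (r a b)]
    (h : ∀ b ∈ t, #(s.bipartiteBelow r b) ≤ 1) :
    ∑ a ∈ s, #(t.bipartiteAbove r a) ≤ #t := by
  rw [sum_card_bipartiteAbove_eq_sum_card_bipartiteBelow]
  simpa using t.sum_le_card_nsmul _ 1 h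

theorem IsMatching.eq_of_mem_of_mem {α : Type*} {G : SimpleGraph α} {M : Finset (Sym2 α)}
    (hM : IsMatching G M) {e f : Sym2 α} (he : e ∈ M) (hf : f ∈ M) {x : α}
    (hxe : x ∈ e) (hxf : x ∈ f) : e = f := by
  by_contra hne
  exact hM.2 e he f hf hne x hxe hxf

/-- For `S = V(M0)` these are the wings. -/
def IsWing {α : Type*} (S : Set α) (e : Sym2 α) : Prop :=
  ∃ u v : α, e = s(u, v) ∧ u ∈ S ∧ v ∉ S

theorem IsWing.eq_of_mem_iff {α : Type*} {S : Set α} {e : Sym2 α} (he : IsWing S e) {x y : α}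
    (hx : x ∈ e) (hy : y ∈ e) (hxy : x ∈ S ↔ y ∈ S) : x = y := by
  obtain ⟨u, v, rfl, hu, hv⟩ := he
  rcases Sym2.mem_iff.1 hx with rfl | rfl <;> rcases Sym2.mem_iff.1 hy with rfl | rfl <;> tauto

def MeetIn {α : Type*} (S : Set α) (e f : Sym2 α) : Prop :=
  ∃ x ∈ S, x ∈ e ∧ x ∈ f

theorem card_bipartiteBelow_meetIn_le_one {α : Type*} {S : Set α} [DecidableRel (MeetIn S)]
    {M : Finset (Sym2 α)} (hM : ∀ e ∈ M, ∀ f ∈ M, ∀ x ∈ e, x ∈ f → e = f) {f : Sym2 α}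
    (hf : ∀ x ∈ f, ∀ y ∈ f, x ∈ S → y ∈ S → x = y) :
    #(M.bipartiteBelow (MeetIn S) f) ≤ 1 := by
  refine card_le_one.2 fun e he e' he' => ?_
  obtain ⟨he, x, hxS, hxe, hxf⟩ := mem_filter.1 he
  obtain ⟨he', y, hyS, hye', hyf⟩ := mem_filter.1 he'
  obtain rfl := hf x hxf y hyf hxS hyS
  exact hM e he e' he' x hxe hye'

theorem degW_le_card_bipartiteAbove_meetIn {α : Type*} [DecidableEq α] {S : Set α}
    [DecidableRel (MeetIn S)] (W : Finset (Sym2 α)) {e : Sym2 α} {x : α} (hxS : x ∈ S)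
    (hxe : x ∈ e) :
    degW W x ≤ #(W.bipartiteAbove (MeetIn S) e) :=
  card_le_card <| monotone_filter_right W fun _ _ hxf => ⟨x, hxS, hxe, hxf⟩

theorem greedy_wings_lower_bound_general (G : SimpleGraph V) (M0 Mstar WM W : Finset (Sym2 V))
    (hMstar : IsMatching G Mstar)
    (hWM : ∀ e, e ∈ WM ↔ e ∈ Mstar ∧
      ∃ u v : V, e = s(u, v) ∧ u ∈ mverts M0 ∧ v ∉ mverts M0)
    (hW : ∀ e ∈ W, e ∈ G.edgeSet ∧
      ∃ u v : V, e = s(u, v) ∧ u ∈ mverts M0 ∧ v ∉ mverts M0)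
    (hgreedy : ∀ u v : V, s(u, v) ∈ WM → u ∈ mverts M0 → v ∉ mverts M0 →
      s(u, v) ∈ W ∨ 1 ≤ degW W u ∨ 2 ≤ degW W v) :
    2 * WM.card ≤ 3 * W.card := by
  classical
  set S := mverts M0
  set inner := fun e => #(W.bipartiteAbove (MeetIn S) e)
  set outer := fun e => #(W.bipartiteAbove (MeetIn Sᶜ) e)
  have hdisj : ∀ e ∈ WM, ∀ f ∈ WM, ∀ x ∈ e, x ∈ f → e = f := fun e he f hf _ =>
    hMstar.eq_of_mem_of_mem ((hWM e).1 he).1 ((hWM f).1 hf).1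
  have hinner : ∑ e ∈ WM, inner e ≤ #W := sum_card_bipartiteAbove_le_card _ fun f hf =>
    card_bipartiteBelow_meetIn_le_one hdisj fun _ hx _ hy hxS hyS =>
      IsWing.eq_of_mem_iff (hW f hf).2 hx hy (iff_of_true hxS hyS)
  have houter : ∑ e ∈ WM, outer e ≤ #W := sum_card_bipartiteAbove_le_card _ fun f hf =>
    card_bipartiteBelow_meetIn_le_one hdisj fun _ hx _ hy hxS hyS =>
      IsWing.eq_of_mem_iff (hW f hf).2 hx hy (iff_of_false hxS hyS)
  have hcharge : ∀ e ∈ WM, 2 ≤ 2 * inner e + outer e := by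
    intro e he
    obtain ⟨-, u, v, rfl, hu, hv⟩ := (hWM e).1 he
    rcases hgreedy u v he hu hv with hmem | hu' | hv'
    · have : 0 < inner s(u, v) :=
        card_pos.2 ⟨_, mem_filter.2 ⟨hmem, u, hu, Sym2.mem_mk_left u v, Sym2.mem_mk_left u v⟩⟩
      omega
    · have : degW W u ≤ inner s(u, v) :=
        degW_le_card_bipartiteAbove_meetIn W hu (Sym2.mem_mk_left u v)
      omega
    · have : degW W v ≤ outer s(u, v) :=
        degW_le_card_bipartiteAbove_meetIn W (S := Sᶜ) hv (Sym2.mem_mk_right u v)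
      omega
  calc 2 * #WM = ∑ _e ∈ WM, 2 := by rw [sum_const, smul_eq_mul, mul_comm]
    _ ≤ ∑ e ∈ WM, (2 * inner e + outer e) := sum_le_sum hcharge
    _ = 2 * ∑ e ∈ WM, inner e + ∑ e ∈ WM, outer e := by rw [sum_add_distrib, mul_sum]
    _ ≤ 3 * #W := by omega

/-- If `W` is a set of wings with `deg_W(u) ≤ 1` for every `u ∈ V(M0)` such that every
wing `(u,v) ∈ W_M` (with `u ∈ V(M0)`, `v ∉ V(M0)`) is in `W`, or has `deg_W(u) ≥ 1`,
or `deg_W(v) ≥ 2`, then `|W| ≥ (2/3)|W_M|`. -/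
theorem greedy_wings_lower_bound (G : SimpleGraph V) (M0 Mstar WM W : Finset (Sym2 V))
    (hM0 : IsMatching G M0)
    (hM0maximal : ∀ e ∈ G.edgeSet, e ∉ M0 → ¬ IsMatching G (insert e M0))
    (hMstar : IsMatching G Mstar)
    (hMstarMax : ∀ N : Finset (Sym2 V), IsMatching G N → N.card ≤ Mstar.card)
    (hWM : ∀ e, e ∈ WM ↔ e ∈ Mstar ∧
      ∃ u v : V, e = s(u, v) ∧ u ∈ mverts M0 ∧ v ∉ mverts M0)
    (hW : ∀ e ∈ W, e ∈ G.edgeSet ∧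
      ∃ u v : V, e = s(u, v) ∧ u ∈ mverts M0 ∧ v ∉ mverts M0)
    (hdeg : ∀ u ∈ mverts M0, degW W u ≤ 1)
    (hgreedy : ∀ u v : V, s(u, v) ∈ WM → u ∈ mverts M0 → v ∉ mverts M0 →
      s(u, v) ∈ W ∨ 1 ≤ degW W u ∨ 2 ≤ degW W v) :
    2 * WM.card ≤ 3 * W.card :=
  greedy_wings_lower_bound_general G M0 Mstar WM W hMstar hWM hW hgreedy
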